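/- For every n ≥ 0 and every list of linear types A_k,…,A_0 with k ≥ n, the variable y admits the weighted judgment y : [𝕋ₙ] ⊢^w y : 𝕋ₙ for some weight w ≥ (2n+1)·X, where 𝕋₀ = [ [] → A₀ ] and 𝕋_{m+1} = [ [A_m] → A_{m+1}, [𝕋_m] ]. -/

import Mathlib

/-! # Tree intersection types -/

mutual
/-- Linear types: `A ::= ⋆ | T → A`. -/
inductive LinTy : Type where
  | star : LinTy
  | arr : TreeTy → LinTy → LinTy
/-- Generic types: linear types or tree types. -/
inductive GenTy : Type where
  | lin : LinTy → GenTy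
  | tree : TreeTy → GenTy
/-- Tree types: finite sequences of generic types. -/
inductive TreeTy : Type where
  | node : List GenTy → TreeTy
end

mutual
/-- Leaves of a generic type. -/
def GenTy.leaves : GenTy → List LinTy
  | .lin A => [A]
  | .tree T => TreeTy.leaves T
  termination_by g => sizeOf g
/-- Leaves extraction on tree types. -/
def TreeTy.leaves : TreeTy → List LinTy
  | .node gs => gs.attach.flatMap (fun g => GenTy.leaves g.1)
  termination_by T => sizeOf T
  decreasing_by simp_wf; have := List.sizeOf_lt_of_mem g.2; omega
end

/-- Concatenation `⊎` of tree types (sequences). -/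
def TreeTy.cat : TreeTy → TreeTy → TreeTy
  | .node a, .node b => .node (a ++ b)

mutual
/-- Weight (size) of a linear type, with parameter `X`. -/
def LinTy.weight (X : ℕ) : LinTy → ℕ
  | .star => 0
  | .arr T A => max (TreeTy.weight X T) (LinTy.weight X A + 1)
  termination_by A => sizeOf A
def GenTy.weight (X : ℕ) : GenTy → ℕ
  | .lin A => LinTy.weight X A
  | .tree T => TreeTy.weight X T
  termination_by g => sizeOf g
def TreeTy.weight (X : ℕ) : TreeTy → ℕ
  | .node gs => X + (gs.attach.map (fun g => GenTy.weight X g.1)).foldr max 0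
  termination_by T => sizeOf T
  decreasing_by simp_wf; have := List.sizeOf_lt_of_mem g.2; omega
end

mutual
/-- Hereditary absence of empty sequences (every leaf context ends in `⋆`). -/
inductive LinTy.Good : LinTy → Prop where
  | star : LinTy.Good .star
  | arr {T A} : TreeTy.Good T → LinTy.Good A → LinTy.Good (.arr T A)
inductive GenTy.Good : GenTy → Prop where
  | lin {A} : LinTy.Good A → GenTy.Good (.lin A)
  | tree {T} : TreeTy.Good T → GenTy.Good (.tree T)
inductive TreeTy.Good : TreeTy → Prop where
  | node {gs : List GenTy} : gs ≠ [] → (∀ g ∈ gs, GenTy.Good g) → TreeTy.Good (.node gs)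
end

/-! ## Leaf contexts -/

/-- One-hole contexts into tree types whose hole sits at a leaf position. -/
inductive LeafCtx : Type where
  | here (l r : List GenTy) : LeafCtx
  | deeper (l : List GenTy) (L : LeafCtx) (r : List GenTy) : LeafCtx

/-- Plugging a linear type into a leaf context. -/
def LeafCtx.plug : LeafCtx → LinTy → TreeTy
  | .here l r, A => .node (l ++ .lin A :: r)
  | .deeper l L r, A => .node (l ++ .tree (L.plug A) :: r)

/-- Number of leaves strictly to the left of the hole. -/
def LeafCtx.holeIdx : LeafCtx → ℕ
  | .here l _ => (TreeTy.node l).leaves.length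
  | .deeper l L _ => (TreeTy.node l).leaves.length + L.holeIdx

/-! ## Type contexts -/

mutual
/-- Linear type contexts: `𝕃c ::= ⟨·⟩ | T → 𝕃c | 𝕋 → A`. -/
inductive LinCtx : Type where
  | hole : LinCtx
  | arrR : TreeTy → LinCtx → LinCtx
  | arrL : TreeCtx → LinTy → LinCtx
/-- Tree type contexts. -/
inductive TreeCtx : Type where
  | node : List GenTy → GenCtx → List GenTy → TreeCtx
/-- Generic type contexts. -/
inductive GenCtx : Type where
  | lin : LinCtx → GenCtx
  | tree : TreeCtx → GenCtx
end

mutual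
def LinCtx.plug : LinCtx → LinTy → LinTy
  | .hole, B => B
  | .arrR T C, B => .arr T (C.plug B)
  | .arrL C A, B => .arr (C.plug B) A
def TreeCtx.plug : TreeCtx → LinTy → TreeTy
  | .node l C r, B => .node (l ++ C.plug B :: r)
def GenCtx.plug : GenCtx → LinTy → GenTy
  | .lin C, B => .lin (C.plug B)
  | .tree C, B => .tree (C.plug B)
end

mutual
/-- Branch size of a linear type context. -/
def LinCtx.bsize (X : ℕ) : LinCtx → ℕ
  | .hole => 0
  | .arrR _ C => 1 + C.bsize X
  | .arrL C _ => C.bsize X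
def TreeCtx.bsize (X : ℕ) : TreeCtx → ℕ
  | .node _ C _ => X + C.bsize X
def GenCtx.bsize (X : ℕ) : GenCtx → ℕ
  | .lin C => C.bsize X
  | .tree C => C.bsize X
end

/-! # λ-terms (de Bruijn) and Closed Call-by-Name -/

inductive Term : Type where
  | var : ℕ → Term
  | lam : Term → Term
  | app : Term → Term → Term

/-- Shifting of free indices `≥ c` by `d`. -/
def Term.lift (d : ℕ) : ℕ → Term → Term
  | c, .var n => if n < c then .var n else .var (n + d)
  | c, .lam t => .lam (Term.lift d (c+1) t)
  | c, .app t u => .app (Term.lift d c t) (Term.lift d c u)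

/-- Capture-avoiding substitution of `u` for index `k`. -/
def Term.subst (u : Term) : ℕ → Term → Term
  | k, .var n => if n = k then Term.lift k 0 u else if k < n then .var (n-1) else .var n
  | k, .lam t => .lam (Term.subst u (k+1) t)
  | k, .app t s => .app (Term.subst u k t) (Term.subst u k s)

/-- `t{x₀ := u}`. -/
def Term.subst0 (t u : Term) : Term := Term.subst u 0 t

def Term.ClosedUnder : Term → ℕ → Prop
  | .var n, k => n < k
  | .lam t, k => t.ClosedUnder (k+1)
  | .app t u, k => t.ClosedUnder k ∧ u.ClosedUnder k

/-- Closed terms: no free variables. -/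
def Term.Closed (t : Term) : Prop := t.ClosedUnder 0

/-- Occurrence of a free variable. -/
def Term.FreeIn : Term → ℕ → Prop
  | .var n, x => n = x
  | .lam t, x => t.FreeIn (x+1)
  | .app t u, x => t.FreeIn x ∨ u.FreeIn x

/-- Weak head reduction `(λy.t)u r₁…r_h →wh t{y:=u} r₁…r_h`. -/
inductive Whr : Term → Term → Prop where
  | beta (t u : Term) : Whr (.app (.lam t) u) (t.subst0 u)
  | appL {t t' : Term} (u : Term) : Whr t t' → Whr (.app t u) (.app t' u)

/-- `n`-step weak head reduction. -/
inductive WhN : ℕ → Term → Term → Prop where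
  | refl (t : Term) : WhN 0 t t
  | step {n t u v} : Whr t u → WhN n u v → WhN (n+1) t v

/-! # Type environments and the tree type system -/

/-- Type environments: maps from (de Bruijn) variables to tree types. -/
def Env : Type := ℕ → TreeTy

def Env.empty : Env := fun _ => .node []

/-- Pointwise concatenation `Γ ⊎ Δ`. -/
def Env.union (Γ Δ : Env) : Env := fun x => (Γ x).cat (Δ x)

/-- Environment of the variable axiom: `x : [A]`. -/
def Env.single (x : ℕ) (A : LinTy) : Env :=
  fun y => if y = x then .node [.lin A] else .node []

/-- Environment extension `Γ, x₀:T` (de Bruijn cons). -/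
def Env.cons (T : TreeTy) (Γ : Env) : Env
  | 0 => T
  | n+1 => Γ n

/-- Wrap a (non-empty) tree type in one extra sequence layer. -/
def TreeTy.wrap : TreeTy → TreeTy
  | .node [] => .node []
  | T => .node [.tree T]

/-- `[Γ]`: wrap each (non-empty) type of the environment in one extra layer. -/
def Env.wrap (Γ : Env) : Env := fun x => (Γ x).wrap

/-- Finite union of environments. -/
def Env.unionF {n : ℕ} (Γs : Fin n → Env) : Env :=
  (List.ofFn Γs).foldr Env.union Env.empty

/-- Tree type derivations. -/
inductive Deriv : Env → Term → GenTy → Type where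
  | var (x : ℕ) (A : LinTy) : Deriv (Env.single x A) (.var x) (.lin A)
  | lam {Γ : Env} {T : TreeTy} {t : Term} {A : LinTy} :
      Deriv (Env.cons T Γ) t (.lin A) → Deriv Γ (.lam t) (.lin (.arr T A))
  | lamStar (t : Term) : Deriv Env.empty (.lam t) (.lin .star)
  | app {Γ Δ : Env} {t u : Term} {T : TreeTy} {A : LinTy} :
      Deriv Γ t (.lin (.arr T A)) → Deriv Δ u (.tree T) →
      Deriv (Env.union Γ Δ) (.app t u) (.lin A)
  | many {t : Term} (n : ℕ) (Γs : Fin n → Env) (Gs : Fin n → GenTy)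
      (prems : ∀ i, Deriv (Γs i) t (Gs i)) :
      Deriv (Env.wrap (Env.unionF Γs)) t (.tree (.node (List.ofFn Gs)))
  | none (t : Term) : Deriv Env.empty t (.tree (.node []))

/-- Size of a derivation: number of rules that are not T-many/T-none. -/
def Deriv.size : ∀ {Γ t G}, Deriv Γ t G → ℕ
  | _, _, _, .var _ _ => 1
  | _, _, _, .lam π => π.size + 1
  | _, _, _, .lamStar _ => 1
  | _, _, _, .app π ρ => π.size + ρ.size + 1
  | _, _, _, .many n _ _ prems => ∑ i : Fin n, (prems i).size
  | _, _, _, .none _ => 0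

/-- Weight of a weighted derivation, with parameter `X`. -/
def Deriv.weight (X : ℕ) : ∀ {Γ t G}, Deriv Γ t G → ℕ
  | _, _, _, .var _ A => A.weight X
  | _, _, _, .lam (T := T) (A := A) π => max (π.weight X) (LinTy.weight X (.arr T A))
  | _, _, _, .lamStar _ => 0
  | _, _, _, .app π ρ => max (π.weight X) (ρ.weight X)
  | _, _, _, .many n _ _ prems => X + (Finset.univ.sup fun i => (prems i).weight X)
  | _, _, _, .none _ => 0

/-- `SubD π n π'`: the judgment of `π'` occurs in `π`, crossing `n` T-many rules
descending from it to the root. -/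
inductive SubD : ∀ {Γ t G}, Deriv Γ t G → ℕ → ∀ {Γ' u G'}, Deriv Γ' u G' → Prop where
  | refl {Γ t G} (π : Deriv Γ t G) : SubD π 0 π
  | lam {Γ T t A} {π : Deriv (Env.cons T Γ) t (.lin A)} {n} {Γ' u G'} {π' : Deriv Γ' u G'} :
      SubD π n π' → SubD (Deriv.lam π) n π'
  | appL {Γ Δ t u T A} {π : Deriv Γ t (.lin (.arr T A))} {ρ : Deriv Δ u (.tree T)}
      {n} {Γ' v G'} {π' : Deriv Γ' v G'} :
      SubD π n π' → SubD (Deriv.app π ρ) n π'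
  | appR {Γ Δ t u T A} {π : Deriv Γ t (.lin (.arr T A))} {ρ : Deriv Δ u (.tree T)}
      {n} {Γ' v G'} {π' : Deriv Γ' v G'} :
      SubD ρ n π' → SubD (Deriv.app π ρ) n π'
  | many {t k} {Γs : Fin k → Env} {Gs : Fin k → GenTy} {prems : ∀ i, Deriv (Γs i) t (Gs i)}
      (i : Fin k) {n} {Γ' u G'} {π' : Deriv Γ' u G'} :
      SubD (prems i) n π' → SubD (Deriv.many k Γs Gs prems) (n+1) π'

/-- The sparse tree types of Turing's fixed-point combinator:
`𝕋₀ = [ [] → A₀ ]` and `𝕋_{n+1} = [ [Aₙ] → A_{n+1}, [𝕋ₙ] ]`. -/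
def Tfam (As : ℕ → LinTy) : ℕ → TreeTy
  | 0 => .node [.lin (.arr (.node []) (As 0))]
  | n+1 => .node [.lin (.arr (.node [.lin (As n)]) (As (n+1))),
                  .tree (.node [.tree (Tfam As n)])]

/-- Environment assigning a single tree type to a single variable. -/
def Env.singleT (x : ℕ) (T : TreeTy) : Env :=
  fun y => if y = x then T else .node []

/-! A single T-many rule over the axiom `y : [A] ⊢ y : A` already weighs `X`. For `n + 1`, the
judgment for `𝕋ₙ₊₁` is a T-many rule whose second premise is a T-many rule over the judgment for
`𝕋ₙ`, so each step adds `2X` to the weight. -/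

def Deriv.cast {Γ Γ' : Env} {t : Term} {G G' : GenTy} (hΓ : Γ = Γ') (hG : G = G')
    (π : Deriv Γ t G) : Deriv Γ' t G' := hΓ ▸ hG ▸ π

@[simp]
theorem Deriv.weight_cast {Γ Γ' : Env} {t : Term} {G G' : GenTy} (hΓ : Γ = Γ') (hG : G = G')
    (π : Deriv Γ t G) (X : ℕ) : (π.cast hΓ hG).weight X = π.weight X := by
  subst hΓ hG; rfl

namespace Env

theorem union_empty (Γ : Env) : Γ.union Env.empty = Γ := by
  funext x
  show (Γ x).cat (.node []) = Γ x
  obtain ⟨gs⟩ := Γ x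
  simp [TreeTy.cat]

theorem unionF_one (Γ : Env) : Env.unionF (fun _ : Fin 1 => Γ) = Γ := by
  simp [Env.unionF, union_empty]

theorem unionF_two (Γs : Fin 2 → Env) : Env.unionF Γs = (Γs 0).union (Γs 1) := by
  simp [Env.unionF, List.ofFn_succ, union_empty]

theorem single_eq_singleT (x : ℕ) (A : LinTy) : Env.single x A = Env.singleT x (.node [.lin A]) :=
  rfl

theorem wrap_singleT (x : ℕ) (T : TreeTy) : (Env.singleT x T).wrap = Env.singleT x T.wrap := by
  funext y
  by_cases h : y = x <;> simp [Env.wrap, Env.singleT, h, TreeTy.wrap]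

theorem union_singleT (x : ℕ) (gs hs : List GenTy) :
    (Env.singleT x (.node gs)).union (Env.singleT x (.node hs)) = Env.singleT x (.node (gs ++ hs)) := by
  funext y
  by_cases h : y = x <;> simp [Env.union, Env.singleT, h, TreeTy.cat]

end Env

theorem TreeTy.wrap_node_cons (g : GenTy) (gs : List GenTy) :
    (TreeTy.node (g :: gs)).wrap = .node [.tree (.node (g :: gs))] :=
  rfl

namespace Deriv

variable {Γ Δ : Env} {t : Term} {G H : GenTy}

def many₁ (π : Deriv Γ t G) : Deriv Γ.wrap t (.tree (.node [G])) :=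
  Deriv.cast (by rw [Env.unionF_one]) (by simp) (Deriv.many 1 (fun _ => Γ) (fun _ => G) fun _ => π)

def many₂ (π : Deriv Γ t G) (ρ : Deriv Δ t H) : Deriv (Γ.union Δ).wrap t (.tree (.node [G, H])) :=
  Deriv.cast (by rw [Env.unionF_two]; rfl) (by simp [List.ofFn_succ])
    (Deriv.many 2 (Fin.cons Γ fun _ => Δ) (Fin.cons G fun _ => H) (Fin.cases π fun _ => ρ))

@[simp]
theorem weight_many₁ (X : ℕ) (π : Deriv Γ t G) : π.many₁.weight X = X + π.weight X := by
  rw [many₁, weight_cast]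
  simp [Deriv.weight]

@[simp]
theorem weight_many₂ (X : ℕ) (π : Deriv Γ t G) (ρ : Deriv Δ t H) :
    (π.many₂ ρ).weight X = X + max (π.weight X) (ρ.weight X) := by
  rw [many₂, weight_cast]
  simp only [weight, Fin.univ_succ, Finset.univ_unique, Finset.map_singleton,
    Finset.cons_eq_insert, Finset.sup_insert, Finset.sup_singleton]
  rfl

end Deriv

/-- the variable `y` admits the weighted judgment
`y : [𝕋ₙ] ⊢ y : 𝕋ₙ` at some weight `≥ (2n+1)·X`. -/
theorem var_Tfam_weight (X : ℕ) (As : ℕ → LinTy) (n : ℕ) :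
    ∃ π : Deriv (Env.singleT 0 (TreeTy.node [.tree (Tfam As n)])) (.var 0)
        (.tree (Tfam As n)),
      (2*n+1) * X ≤ π.weight X := by
  induction n with
  | zero =>
    refine ⟨(Deriv.var 0 _).many₁.cast ?_ (by rw [Tfam]), ?_⟩
    · rw [Env.single_eq_singleT, Env.wrap_singleT, TreeTy.wrap_node_cons, Tfam]
    · simp
  | succ n ih =>
    obtain ⟨π, hπ⟩ := ih
    refine ⟨((Deriv.var 0 _).many₂ π.many₁).cast ?_ (by rw [Tfam]), ?_⟩
    · rw [Env.single_eq_singleT, Env.wrap_singleT, TreeTy.wrap_node_cons, Env.union_singleT,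
        Env.wrap_singleT, List.singleton_append, TreeTy.wrap_node_cons, Tfam]
    · rw [Deriv.weight_cast, Deriv.weight_many₂, Deriv.weight_many₁]
      refine le_trans ?_ (Nat.add_le_add_left (le_max_right _ _) X)
      linarith
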